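/- arXiv:2207.07306 — 9 statements merged into one kernel-verified Lean document; each statement's English description precedes it below -/
import Mathlib

section
/- In any frame (W,R), if X and Y are propositions, then X ∩ Y is a proposition. -/
def RImg {W : Type*} (R : W → W → Prop) (X : Set W) : Set W := {t | ∃ s ∈ X, R s t}
def RBox {W : Type*} (R : W → W → Prop) (X : Set W) : Set W := {s | ∀ t, R s t → t ∈ X}
def RDia {W : Type*} (R : W → W → Prop) (X : Set W) : Set W := (RBox R Xᶜ)ᶜ
def IsProposition {W : Type*} (R : W → W → Prop) (X : Set W) : Prop :=
  RImg R X ∩ RBox R (RImg R X) ⊆ X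

theorem stmt_5 {W : Type*} (R : W → W → Prop) (X Y : Set W)
    (hX : IsProposition R X) (hY : IsProposition R Y) :
    IsProposition R (X ∩ Y) := by
  intro t ⟨⟨s, hs, hst⟩, hbox⟩
  constructor
  · exact hX ⟨⟨s, hs.1, hst⟩, fun u htu => (hbox u htu).elim fun v hv => ⟨v, hv.1.1, hv.2⟩⟩
  · exact hY ⟨⟨s, hs.2, hst⟩, fun u htu => (hbox u htu).elim fun v hv => ⟨v, hv.1.2, hv.2⟩⟩
end

section
/- In any frame (W,R), if X is a proposition, then X ⊆ R^□((W \ R^□(∅)) ∪ X). -/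
theorem stmt_7 {W : Type*} (R : W → W → Prop) (X : Set W)
    (hX : IsProposition R X) :
    X ⊆ RBox R ((RBox R (∅ : Set W))ᶜ ∪ X) := by
  intro x hx t hRt
  by_cases h : t ∈ RBox R (∅ : Set W)
  · right
    exact hX ⟨⟨x, hx, hRt⟩, fun u hu => absurd (h u hu) (Set.notMem_empty u)⟩
  · left; exact h
end

section
/- In any frame (W,R) with R symmetric, X ⊆ W is a proposition if and only if R[X] ∩ R^□(R^◇(X)) ⊆ X, if and only if X ⊆ R^□((W \ R^□(R^◇(X))) ∪ X). -/
lemma dia_eq_img {W : Type*} (R : W → W → Prop) (hR : Symmetric R) (X : Set W) :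
    RDia R X = RImg R X := by
  ext t
  simp only [RDia, RBox, RImg, Set.mem_compl_iff, Set.mem_setOf_eq]
  push_neg
  constructor
  · rintro ⟨s, hst, hs⟩; exact ⟨s, hs, hR hst⟩
  · rintro ⟨s, hs, hst⟩; exact ⟨s, hR hst, hs⟩

theorem stmt_10 {W : Type*} (R : W → W → Prop) (hR : Symmetric R) (X : Set W) :
    (IsProposition R X ↔ RImg R X ∩ RBox R (RDia R X) ⊆ X) ∧
    (IsProposition R X ↔ X ⊆ RBox R ((RBox R (RDia R X))ᶜ ∪ X)) := by
  rw [dia_eq_img R hR X]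
  refine ⟨Iff.rfl, ?_⟩
  constructor
  · intro h x hx t hxt
    by_cases ht : t ∈ RBox R (RImg R X)
    · exact Or.inr (h ⟨⟨x, hx, hxt⟩, ht⟩)
    · exact Or.inl ht
  · rintro h t ⟨⟨x, hx, hxt⟩, ht⟩
    rcases h hx t hxt with h' | h'
    · exact absurd ht h'
    · exact h'
end

section
/- For every propositional formula φ (built from propositional variables, ⊥, ∧, →), every model M = (W,R,V), and every state s ∈ W: M,s ⊨ φ in the strict-implication semantics iff M,s ⊩ M(φ) in standard modal semantics, where M is the translation fixing variables and ⊥, commuting with ∧, and sending φ→ψ to □(M(φ)→M(ψ)). -/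
inductive Form where
  | var : ℕ → Form
  | bot : Form
  | and : Form → Form → Form
  | imp : Form → Form → Form

def Sat {W : Type*} (R : W → W → Prop) (V : ℕ → Set W) : W → Form → Prop
  | s, .var p => s ∈ V p
  | _, .bot => False
  | s, .and φ ψ => Sat R V s φ ∧ Sat R V s ψ
  | s, .imp φ ψ => ∀ t, R s t → Sat R V t φ → Sat R V t ψ

inductive MForm where
  | var : ℕ → MForm
  | bot : MForm
  | and : MForm → MForm → MForm
  | imp : MForm → MForm → MForm
  | box : MForm → MForm

def MSat {W : Type*} (R : W → W → Prop) (V : ℕ → Set W) : W → MForm → Prop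
  | s, .var p => s ∈ V p
  | _, .bot => False
  | s, .and φ ψ => MSat R V s φ ∧ MSat R V s ψ
  | s, .imp φ ψ => MSat R V s φ → MSat R V s ψ
  | s, .box φ => ∀ t, R s t → MSat R V t φ

def MTrans : Form → MForm
  | .var p => .var p
  | .bot => .bot
  | .and φ ψ => .and (MTrans φ) (MTrans ψ)
  | .imp φ ψ => .box (.imp (MTrans φ) (MTrans ψ))

theorem stmt_11 {W : Type*} (R : W → W → Prop) (V : ℕ → Set W) (s : W) (φ : Form) :
    Sat R V s φ ↔ MSat R V s (MTrans φ) := by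
  induction φ generalizing s with
  | var p => rfl
  | bot => rfl
  | and a b iha ihb => simp [Sat, MSat, MTrans, iha, ihb]
  | imp a b iha ihb =>
    simp only [Sat, MSat, MTrans]
    exact ⟨fun h t ht ha => (ihb t).mp (h t ht ((iha t).mpr ha)),
           fun h t ht ha => (ihb t).mpr (h t ht ((iha t).mp ha))⟩
end

section
/- In every interpretation M (a model where every propositional variable is assigned a proposition), the truth set ‖φ‖ = {s | M,s ⊨ φ} of every formula φ is a proposition of the underlying frame. -/
theorem stmt_12 {W : Type*} (R : W → W → Prop) (V : ℕ → Set W)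
    (hV : ∀ p, IsProposition R (V p)) (φ : Form) :
    IsProposition R {s | Sat R V s φ} := by
  induction φ with
  | var p => exact hV p
  | bot =>
    rintro s ⟨⟨u, hu, _⟩, -⟩
    exact hu.elim
  | and φ ψ ihφ ihψ =>
    rintro s ⟨⟨u, hu, hus⟩, hbox⟩
    constructor
    · exact ihφ ⟨⟨u, hu.1, hus⟩, fun t hst => by
        obtain ⟨v, hv, hvt⟩ := hbox t hst; exact ⟨v, hv.1, hvt⟩⟩
    · exact ihψ ⟨⟨u, hu.2, hus⟩, fun t hst => by
        obtain ⟨v, hv, hvt⟩ := hbox t hst; exact ⟨v, hv.2, hvt⟩⟩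
  | imp φ ψ ihφ ihψ =>
    rintro s ⟨-, hbox⟩ t hst htφ
    obtain ⟨v, hv, hvt⟩ := hbox t hst
    exact hv t hvt htφ
end

section
/- In every symmetric pointed model (W,R,V,s), for all formulas φ,ψ: if s ⊨ φ and s ⊭ ψ, then s ⊨ (φ→ψ)→⊥. Consequently the rule (Sym1) is truth-preserving: if Γ∪{ψ} semantically entails χ at s and Γ∪{(φ→ψ)→⊥} semantically entails χ at s, then Γ∪{φ} semantically entails χ at s. -/
theorem stmt_16 {W : Type*} (R : W → W → Prop) (V : ℕ → Set W)
    (hR : Symmetric R) (s : W) :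
    (∀ φ ψ : Form, Sat R V s φ → ¬ Sat R V s ψ →
      Sat R V s (.imp (.imp φ ψ) .bot)) ∧
    (∀ (Γ : Set Form) (φ ψ χ : Form),
      ((∀ γ ∈ Γ ∪ {ψ}, Sat R V s γ) → Sat R V s χ) →
      ((∀ γ ∈ Γ ∪ {.imp (.imp φ ψ) .bot}, Sat R V s γ) → Sat R V s χ) →
      ((∀ γ ∈ Γ ∪ {φ}, Sat R V s γ) → Sat R V s χ)) := by
  have key : ∀ φ ψ : Form, Sat R V s φ → ¬ Sat R V s ψ →
      Sat R V s (.imp (.imp φ ψ) .bot) := by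
    intro φ ψ hφ hψ t hst ht
    exact hψ (ht s (hR hst) hφ)
  refine ⟨key, ?_⟩
  intro Γ φ ψ χ h1 h2 hΓ
  have hφ : Sat R V s φ := hΓ φ (Or.inr rfl)
  by_cases hψ : Sat R V s ψ
  · exact h1 (fun γ hγ => hγ.elim (fun h => hΓ γ (Or.inl h)) (fun h => h ▸ hψ))
  · exact h2 (fun γ hγ => hγ.elim (fun h => hΓ γ (Or.inl h)) (fun h => h ▸ key φ ψ hφ hψ))
end

section
/- For any symmetric model M = (W,R,V): M is an interpretation (every V(p) is a proposition) if and only if for every propositional variable p, the sequent ({p}, ((p→⊥)→⊥)→p) is valid in M (true at every state of M). -/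
theorem stmt_17 {W : Type*} (R : W → W → Prop) (V : ℕ → Set W)
    (hR : Symmetric R) :
    (∀ p, IsProposition R (V p)) ↔
    (∀ p, ∀ s : W, Sat R V s (.var p) →
      Sat R V s (.imp (.imp (.imp (.var p) .bot) .bot) (.var p))) := by
  constructor
  · intro h p s hs t hst hnn
    apply h p
    constructor
    · exact ⟨s, hs, hst⟩
    · intro u htu
      by_contra hu
      apply hnn u htu
      intro v huv hv
      exact hu ⟨v, hv, hR huv⟩
  · intro h p t ⟨⟨s, hs, hst⟩, hbox⟩
    apply h p s hs t hst
    intro u htu hnp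
    obtain ⟨v, hv, hvu⟩ := hbox u htu
    exact hnp v (hR hvu) hv
end

section
/- For any transitive model M = (W,R,V): M is an interpretation (every V(p) is a proposition) if and only if for every propositional variable p, the sequent ({p}, (⊥→⊥)→p) is valid in M. -/
theorem stmt_18 {W : Type*} (R : W → W → Prop) (V : ℕ → Set W)
    (hR : Transitive R) :
    (∀ p, IsProposition R (V p)) ↔
    (∀ p, ∀ s : W, Sat R V s (.var p) →
      Sat R V s (.imp (.imp .bot .bot) (.var p))) := by
  constructor
  · intro h p s hs t hst _
    exact h p ⟨⟨s, hs, hst⟩, fun u htu => ⟨s, hs, hR hst htu⟩⟩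
  · intro h p t ⟨⟨s, hs, hst⟩, _⟩
    exact h p s hs t hst (fun _ _ hb => hb)
end

section
/- Let (W,R,V,w) be a pointed model with R reflexive, and let Unr^re_w(M) be the reflexive unravelling of M from w (worlds are finite R-paths starting at w, the relation is the reflexive closure of the one-step extension relation, and a path is in V'(p) iff its last element is in V(p)). Then for every formula φ and every path (s_0,...,s_n), Unr^re_w(M),(s_0,...,s_n) ⊨ φ iff M,s_n ⊨ φ. Moreover the reflexive unravelling is a reflexive interpretation: for every p, R*[V'(p)] ∩ R*^□(R*[V'(p)]) ⊆ V'(p). -/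
/-- Worlds of the unravelling: nonempty reversed R-paths starting (originally) at w.
The list is stored in reverse, so its head is the last element of the path and its
last element is w; `List.Chain' (fun a b => R b a)` expresses that consecutive
elements of the original path are R-related. -/
def UnrWorld {W : Type*} (R : W → W → Prop) (w : W) : Type _ :=
  {l : List W // ∃ h : l ≠ [], l.getLast h = w ∧ List.Chain' (fun a b => R b a) l}

/-- One-step extension relation R' of the unravelling. -/
def UnrRel {W : Type*} (R : W → W → Prop) (w : W)
    (p q : UnrWorld R w) : Prop := ∃ x, q.val = x :: p.val

/-- Reflexive closure R* of R'. -/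
def UnrRelRefl {W : Type*} (R : W → W → Prop) (w : W)
    (p q : UnrWorld R w) : Prop := p = q ∨ UnrRel R w p q

/-- Valuation of the unravelling: a path is in V'(n) iff its last element (the head
of the reversed list) is in V(n). -/
def UnrVal {W : Type*} (R : W → W → Prop) (w : W) (V : ℕ → Set W)
    (n : ℕ) : Set (UnrWorld R w) := {l | ∃ x ∈ V n, l.val.head? = some x}

/-!
The map sending a path to its last element is a bounded morphism from the reflexive unravelling
onto `M` (the loops added by the reflexive closure are matched because `R` itself is reflexive),
so it preserves the truth of every formula. For the second claim, extend a path `l` by a copy of its own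
last element: the new path `q` sees the same valuation as `l`, and its only `R*`-predecessors are
`q` and `l`, so `q ∈ R*[V'(p)]` forces `l ∈ V'(p)`.
-/

structure IsBoundedMorphism {W' W : Type*} (R' : W' → W' → Prop) (R : W → W → Prop)
    (f : W' → W) : Prop where
  forth : ∀ a b, R' a b → R (f a) (f b)
  back : ∀ a t, R (f a) t → ∃ b, R' a b ∧ f b = t

theorem IsBoundedMorphism.sat_iff {W' W : Type*} {R' : W' → W' → Prop} {R : W → W → Prop}
    {f : W' → W} (hf : IsBoundedMorphism R' R f) (V : ℕ → Set W) (φ : Form) (a : W') :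
    Sat R' (fun n => f ⁻¹' V n) a φ ↔ Sat R V (f a) φ := by
  induction φ generalizing a with
  | var p => rfl
  | bot => rfl
  | and φ ψ ihφ ihψ => exact and_congr (ihφ a) (ihψ a)
  | imp φ ψ ihφ ihψ =>
    constructor
    · rintro h t hat hφ
      obtain ⟨b, hab, rfl⟩ := hf.back a t hat
      exact (ihψ b).mp (h b hab ((ihφ b).mpr hφ))
    · intro h b hab hφ
      exact (ihψ b).mpr (h (f b) (hf.forth a b hab) ((ihφ b).mp hφ))

theorem isProposition_of_forall_exists_succ {W : Type*} {R : W → W → Prop} {X : Set W}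
    (h : ∀ s, ∃ t, R s t ∧ (t ∈ X → s ∈ X) ∧ ∀ u, R u t → u = t ∨ u = s) :
    IsProposition R X := by
  rintro s ⟨-, hbox⟩
  obtain ⟨t, hst, htX, hpred⟩ := h s
  obtain ⟨u, huX, hut⟩ := hbox t hst
  rcases hpred u hut with rfl | rfl
  · exact htX huX
  · exact huX

namespace UnrWorld

variable {W : Type*} {R : W → W → Prop} {w : W}

def last (l : UnrWorld R w) : W := l.val.head l.2.1

theorem head?_eq_some_iff {l : UnrWorld R w} {x : W} : l.val.head? = some x ↔ l.last = x := by
  rw [List.head?_eq_some_head l.2.1, Option.some_inj]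
  rfl

def cons (l : UnrWorld R w) (t : W) (h : R l.last t) : UnrWorld R w :=
  ⟨t :: l.val, List.cons_ne_nil _ _, by rw [List.getLast_cons l.2.1]; exact l.2.2.1, by
    rw [List.Chain', List.isChain_cons]
    exact ⟨fun y hy => by rwa [head?_eq_some_iff.mp hy] at h, l.2.2.2⟩⟩

theorem unrRel_cons (l : UnrWorld R w) (t : W) (h : R l.last t) : UnrRel R w l (l.cons t h) :=
  ⟨t, rfl⟩

theorem eq_of_unrRel_cons {s l : UnrWorld R w} {t : W} {h : R l.last t}
    (hs : UnrRel R w s (l.cons t h)) : s = l := by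
  obtain ⟨x, hx⟩ := hs
  exact Subtype.ext (List.cons.inj hx).2.symm

theorem _root_.UnrRel.rel_last {l q : UnrWorld R w} (h : UnrRel R w l q) : R l.last q.last := by
  obtain ⟨y, hy⟩ := h
  have hchain := q.2.2.2
  rw [hy, List.Chain', List.isChain_cons] at hchain
  have hq : q.last = y := head?_eq_some_iff.mp (by rw [hy]; rfl)
  exact hq ▸ hchain.1 l.last (head?_eq_some_iff.mpr rfl)

theorem unrVal_eq_preimage (V : ℕ → Set W) : UnrVal R w V = fun n => last ⁻¹' V n := by
  ext n l
  simp only [UnrVal, Set.mem_ofPred_eq, Set.mem_preimage, head?_eq_some_iff, exists_eq_right']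

theorem isBoundedMorphism_last (hR : ∀ x, R x x) :
    IsBoundedMorphism (UnrRelRefl R w) R last where
  forth := by
    rintro l q (rfl | hlq)
    exacts [hR _, hlq.rel_last]
  back l t hlt := ⟨l.cons t hlt, Or.inr (unrRel_cons l t hlt), rfl⟩

end UnrWorld

theorem stmt_19 {W : Type*} (R : W → W → Prop) (V : ℕ → Set W) (w : W)
    (hR : Reflexive R) :
    (∀ (φ : Form) (l : UnrWorld R w) (x : W), l.val.head? = some x →
      (Sat (UnrRelRefl R w) (UnrVal R w V) l φ ↔ Sat R V x φ)) ∧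
    (∀ n, IsProposition (UnrRelRefl R w) (UnrVal R w V n)) := by
  rw [UnrWorld.unrVal_eq_preimage]
  refine ⟨fun φ l x hx => ?_, fun n => isProposition_of_forall_exists_succ fun l => ?_⟩
  · rw [← UnrWorld.head?_eq_some_iff.mp hx]
    exact (UnrWorld.isBoundedMorphism_last hR).sat_iff V φ l
  · refine ⟨l.cons l.last (hR _), Or.inr (UnrWorld.unrRel_cons _ _ _), id, ?_⟩
    rintro u (rfl | hu)
    exacts [Or.inl rfl, Or.inr (UnrWorld.eq_of_unrRel_cons hu)]
end
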